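/- arXiv:2109.01131 — 2 statements merged into one kernel-verified Lean document; each statement's English description precedes it below -/
import Mathlib

section
/- For every L-formula φ(v₁,…,vₙ) that has a realization in ℕ⁺, and every tuple c̄ ∈ (ℕ⁺)^k, there exists a tuple ā ∈ (ℕ⁺)ⁿ such that ℕ⁺ ⊨ φ(ā) and σ(ā) ∩ σ(c̄) = ∅ (no prime divides both a component of ā and a component of c̄). -/
/-!
A permutation `π` of the primes induces an automorphism of `(ℕ+, ·, 1)`, sending `∏ pᵢ` to
`∏ π pᵢ`, and automorphisms preserve the truth of formulas. As there are infinitely many primes,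
some permutation moves the finitely many primes dividing a realization `ā` of `φ` off the
finitely many primes dividing `c̄`; the image of `ā` is the required realization.
-/

open FirstOrder Language

/-- The language `L` with one binary function symbol `·` and one constant symbol `1`. -/
def L : FirstOrder.Language :=
  ⟨fun n => match n with | 0 => Unit | 2 => Unit | _ => Empty, fun _ => Empty⟩

/-- Any monoid is an `L`-structure, with `·` interpreted as multiplication and `1` as the
identity. In particular `ℕ+` is the standard model of Skolem arithmetic, and
`Multiplicative ℕ` is the additive `L`-structure `(ℕ, +, 0)`. -/
instance (M : Type*) [Monoid M] : L.Structure M where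
  funMap {n} f x :=
    match n, f, x with
    | 0, _, _ => 1
    | 2, _, x => x 0 * x 1
  RelMap r _ := r.elim

theorem Finset.exists_perm_forall_apply_notMem {α : Type*} [Infinite α] (s t : Finset α) :
    ∃ π : Equiv.Perm α, ∀ x ∈ s, π x ∉ t := by
  classical
  induction s using Finset.induction_on with
  | empty => exact ⟨1, by simp⟩
  | @insert x s hx ih =>
    obtain ⟨π, hπ⟩ := ih
    obtain ⟨y, hy⟩ := Infinite.exists_notMem_finset (t ∪ s.image π)
    rw [Finset.mem_union, Finset.mem_image, not_or, not_exists] at hy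
    refine ⟨(Equiv.swap (π x) y) * π, ?_⟩
    simp only [Finset.mem_insert, forall_eq_or_imp, Equiv.Perm.mul_apply, Equiv.swap_apply_left]
    refine ⟨hy.1, fun z hz => ?_⟩
    have hzx : π z ≠ π x := fun h => hx (π.injective h ▸ hz)
    have hzy : π z ≠ y := fun h => hy.2 z ⟨hz, h⟩
    rw [Equiv.swap_apply_of_ne_of_ne hzx hzy]
    exact hπ z hz

def MulEquiv.toLEquiv {M N : Type*} [Monoid M] [Monoid N] (f : M ≃* N) : L.Equiv M N where
  toEquiv := f.toEquiv
  map_fun' {m} g x := by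
    match m, g with
    | 0, _ => exact map_one f
    | 2, _ => exact map_mul f (x 0) (x 1)
  map_rel' r := r.elim

namespace PNat

open PrimeMultiset

/- `PrimeMultiset` is a non-reducible synonym of `Multiset Nat.Primes`, so rewriting with
`Multiset` lemmas below needs `erw`. -/

theorem coe_dvd_iff_mem_toFinset_factorMultiset {p : Nat.Primes} {n : ℕ+} :
    (p : ℕ+) ∣ n ↔ p ∈ n.factorMultiset.toFinset := by
  erw [← factorMultiset_le_iff, factorMultiset_ofPrime, Multiset.mem_toFinset]
  exact Multiset.singleton_le

noncomputable def mapPrimes (f : Nat.Primes → Nat.Primes) (n : ℕ+) : ℕ+ :=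
  prod (n.factorMultiset.map f)

variable (f g : Nat.Primes → Nat.Primes)

theorem factorMultiset_mapPrimes (n : ℕ+) :
    (mapPrimes f n).factorMultiset = n.factorMultiset.map f :=
  factorMultiset_prod _

theorem mapPrimes_mul (m n : ℕ+) : mapPrimes f (m * n) = mapPrimes f m * mapPrimes f n := by
  erw [mapPrimes, factorMultiset_mul, Multiset.map_add, prod_add]
  rfl

theorem mapPrimes_mapPrimes (n : ℕ+) : mapPrimes f (mapPrimes g n) = mapPrimes (f ∘ g) n := by
  erw [mapPrimes, factorMultiset_mapPrimes, Multiset.map_map]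
  rfl

theorem mapPrimes_id (n : ℕ+) : mapPrimes id n = n := by
  erw [mapPrimes, Multiset.map_id, prod_factorMultiset]

theorem coe_dvd_mapPrimes_iff {p : Nat.Primes} {n : ℕ+} :
    (p : ℕ+) ∣ mapPrimes f n ↔ ∃ q : Nat.Primes, (q : ℕ+) ∣ n ∧ f q = p := by
  simp only [coe_dvd_iff_mem_toFinset_factorMultiset]
  erw [factorMultiset_mapPrimes, Multiset.mem_toFinset, Multiset.mem_map]
  exact exists_congr fun q => and_congr_left' Multiset.mem_toFinset.symm

noncomputable def permPrimes (π : Equiv.Perm Nat.Primes) : ℕ+ ≃* ℕ+ where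
  toFun := mapPrimes π
  invFun := mapPrimes π.symm
  left_inv n := by rw [mapPrimes_mapPrimes, π.symm_comp_self, mapPrimes_id]
  right_inv n := by rw [mapPrimes_mapPrimes, π.self_comp_symm, mapPrimes_id]
  map_mul' := mapPrimes_mul π

end PNat

/-- Any satisfiable formula has a realization coprime to any given tuple of parameters. -/
theorem coprime_realization (n k : ℕ) (φ : L.Formula (Fin n))
    (hφ : ∃ a : Fin n → ℕ+, φ.Realize a) (c : Fin k → ℕ+) :
    ∃ a : Fin n → ℕ+, φ.Realize a ∧
      ∀ p : ℕ+, (p : ℕ).Prime → (∃ i, p ∣ a i) → ¬ ∃ j, p ∣ c j := by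
  classical
  obtain ⟨a, ha⟩ := hφ
  obtain ⟨π, hπ⟩ := Finset.exists_perm_forall_apply_notMem
    (Finset.univ.biUnion fun i => (a i).factorMultiset.toFinset)
    (Finset.univ.biUnion fun j => (c j).factorMultiset.toFinset)
  refine ⟨fun i => PNat.permPrimes π (a i),
    (StrongHomClass.realize_formula (PNat.permPrimes π).toLEquiv φ).2 ha, ?_⟩
  rintro p hp ⟨i, hpa⟩ ⟨j, hpc⟩
  obtain ⟨q, rfl⟩ : ∃ q : Nat.Primes, (q : ℕ+) = p := ⟨⟨p, hp⟩, rfl⟩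
  obtain ⟨r, hra, rfl⟩ := (PNat.coe_dvd_mapPrimes_iff π (n := a i)).1 hpa
  refine hπ r ?_ ?_
  · simpa only [Finset.mem_biUnion, Finset.mem_univ, true_and,
      ← PNat.coe_dvd_iff_mem_toFinset_factorMultiset] using ⟨i, hra⟩
  · simpa only [Finset.mem_biUnion, Finset.mem_univ, true_and,
      ← PNat.coe_dvd_iff_mem_toFinset_factorMultiset] using ⟨j, hpc⟩
end

section
/- Let M be a commutative monoid, regarded as an L-structure, that satisfies exactly the same L-sentences as ℕ⁺. Then every non-empty set D ⊆ Mⁿ that is definable with parameters from M has a ≼-minimal element: some d̄ ∈ D such that every ē ∈ D with ē ≼ d̄ equals d̄. -/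
open FirstOrder Language

/-- The relation `≼` on tuples: `a ≼ b` iff `a = b`, or `a m ∣ b m` where `m` is the
least index at which `a` and `b` differ. -/
def preceq {M : Type*} [Monoid M] {n : ℕ} (a b : Fin n → M) : Prop :=
  a = b ∨ ∃ m : Fin n, (∀ i, i < m → a i = b i) ∧ a m ≠ b m ∧ a m ∣ b m

theorem PNat.wellFounded_dvd_ne : WellFounded fun a b : ℕ+ => a ∣ b ∧ a ≠ b :=
  Subrelation.wf (fun ⟨hdvd, hne⟩ => lt_of_le_of_ne (PNat.le_of_dvd hdvd) hne) wellFounded_lt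

namespace SkolemArithmetic

variable {M : Type*} [Monoid M] {α β : Type*} {n : ℕ}

def mulTerm (t u : L.Term α) : L.Term α :=
  Term.func (l := 2) () ![t, u]

@[simp]
theorem realize_mulTerm (t u : L.Term α) (v : α → M) :
    (mulTerm t u).realize v = t.realize v * u.realize v :=
  rfl

noncomputable def dvdFormula (x y : α) : L.Formula α :=
  Formula.iExs (Fin 1)
    ((mulTerm (Term.var (Sum.inl x)) (Term.var (Sum.inr 0))).equal (Term.var (Sum.inl y)))

@[simp]
theorem realize_dvdFormula (x y : α) (v : α → M) :
    (dvdFormula x y).Realize v ↔ v x ∣ v y := by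
  simp only [dvdFormula, Formula.realize_iExs, Formula.realize_equal, realize_mulTerm,
    Term.realize_var, Sum.elim_inl, Sum.elim_inr]
  exact ⟨fun ⟨z, hz⟩ => ⟨z 0, hz.symm⟩, fun ⟨z, hz⟩ => ⟨fun _ => z, hz.symm⟩⟩

noncomputable def eqFormula {ι : Type*} [Finite ι] (x y : ι → α) : L.Formula α :=
  Formula.iInf fun i => (Term.var (x i)).equal (Term.var (y i))

@[simp]
theorem realize_eqFormula {ι : Type*} [Finite ι] (x y : ι → α) (v : α → M) :
    (eqFormula x y).Realize v ↔ v ∘ x = v ∘ y := by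
  simp [eqFormula, funext_iff]

noncomputable def preceqFormula (x y : Fin n → α) : L.Formula α :=
  eqFormula x y ⊔ Formula.iSup fun m : Fin n =>
    eqFormula (fun i : {i // i < m} => x i) (fun i => y i) ⊓
      (∼((Term.var (x m)).equal (Term.var (y m))) ⊓ dvdFormula (x m) (y m))

@[simp]
theorem realize_preceqFormula (x y : Fin n → α) (v : α → M) :
    (preceqFormula x y).Realize v ↔ preceq (v ∘ x) (v ∘ y) := by
  simp [preceqFormula, preceq, funext_iff]

def HasPreceqMinimal (D : Set (Fin n → M)) : Prop :=
  ∃ d ∈ D, ∀ e ∈ D, preceq e d → e = d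

theorem hasPreceqMinimal_of_wellFounded (hwf : WellFounded fun a b : M => a ∣ b ∧ a ≠ b)
    {D : Set (Fin n → M)} (hD : D.Nonempty) : HasPreceqMinimal D := by
  obtain ⟨d, hd, hmin⟩ := (Pi.Lex.wellFounded (· < ·) fun _ => hwf).has_min D hD
  refine ⟨d, hd, fun e he hed => hed.elim id fun ⟨m, hlt, hne, hdvd⟩ => ?_⟩
  exact absurd ⟨m, hlt, hdvd, hne⟩ (hmin e he)

/-- Under the outer `∃` the new variable `Sum.inr` is the candidate `d`; under the inner `∀` it is
the competitor `e`, and `d` becomes `Sum.inl ∘ Sum.inr`. -/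
noncomputable def minimalityFormula (φ : L.Formula (Fin n ⊕ β)) (p : β → α) : L.Formula α :=
  (Formula.iExs (Fin n) (φ.relabel (Sum.elim Sum.inr (Sum.inl ∘ p)))).imp
    (Formula.iExs (Fin n) (φ.relabel (Sum.elim Sum.inr (Sum.inl ∘ p)) ⊓
      Formula.iAlls (Fin n) ((φ.relabel (Sum.elim Sum.inr (Sum.inl ∘ Sum.inl ∘ p))).imp
        ((preceqFormula Sum.inr (Sum.inl ∘ Sum.inr)).imp
          (eqFormula Sum.inr (Sum.inl ∘ Sum.inr))))))

theorem realize_minimalityFormula (φ : L.Formula (Fin n ⊕ β)) (p : β → α) (v : α → M) :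
    (minimalityFormula φ p).Realize v ↔
      ({a | φ.Realize (Sum.elim a (v ∘ p))}.Nonempty →
        HasPreceqMinimal {a | φ.Realize (Sum.elim a (v ∘ p))}) := by
  simp [minimalityFormula, HasPreceqMinimal, Sum.comp_elim, Set.Nonempty, ← Function.comp_assoc]

noncomputable def minimalitySentence [Finite β] (φ : L.Formula (Fin n ⊕ β)) : L.Sentence :=
  Formula.iAlls β (minimalityFormula φ Sum.inr)

theorem realize_minimalitySentence [Finite β] (φ : L.Formula (Fin n ⊕ β)) :
    M ⊨ minimalitySentence φ ↔ ∀ c : β → M, {a | φ.Realize (Sum.elim a c)}.Nonempty →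
      HasPreceqMinimal {a | φ.Realize (Sum.elim a c)} := by
  simp [minimalitySentence, Sentence.Realize, realize_minimalityFormula]

theorem realize_minimalitySentence_of_wellFounded [Finite β]
    (hwf : WellFounded fun a b : M => a ∣ b ∧ a ≠ b) (φ : L.Formula (Fin n ⊕ β)) :
    M ⊨ minimalitySentence φ :=
  (realize_minimalitySentence φ).2 fun _ => hasPreceqMinimal_of_wellFounded hwf

end SkolemArithmetic

/-- In any model of Skolem arithmetic, every non-empty set definable with parameters has a
`≼`-minimal element. -/
theorem definable_set_has_minimal {M : Type*} [CommMonoid M]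
    (hM : ∀ s : L.Sentence, M ⊨ s ↔ ℕ+ ⊨ s)
    (n : ℕ) (D : Set (Fin n → M)) (hD : D.Nonempty)
    (hdef : ∃ (k : ℕ) (φ : L.Formula (Fin n ⊕ Fin k)) (c : Fin k → M),
      D = {a | φ.Realize (Sum.elim a c)}) :
    ∃ d ∈ D, ∀ e ∈ D, preceq e d → e = d := by
  obtain ⟨k, φ, c, rfl⟩ := hdef
  have hPNat : ℕ+ ⊨ SkolemArithmetic.minimalitySentence φ :=
    SkolemArithmetic.realize_minimalitySentence_of_wellFounded PNat.wellFounded_dvd_ne φ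
  exact (SkolemArithmetic.realize_minimalitySentence φ).1 ((hM _).2 hPNat) c hD
end
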